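/- arXiv:2105.05051 — 4 statements merged into one kernel-verified Lean document; each statement's English description precedes it below -/
import Mathlib

section
/- Let μ_D be a probability measure compactly supported in (0,∞) and let t > t_c := (∫ λ^{-2} dμ_D(λ))^{-1}. Then there exists a unique c > 0 such that ∫ 1/(λ² + t²c) dμ_D(λ) = 1/t. -/
open MeasureTheory Set

/-!
Substituting `u = t² c`, the claim is about `g u = ∫ (λ² + u)⁻¹ dμ_D` on `u ≥ 0`. Since `μ_D`
lives on `[a, ∞)` with `a > 0`, the integrand is bounded by `a⁻²`, so `g` is continuous by
dominated convergence, and it is strictly decreasing. Moreover `g 0 = 1 / t_c > 1 / t` while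
`g u ≤ 1 / u`, so the intermediate value theorem gives a root, unique by strict monotonicity.
-/

theorem integral_lt_integral_of_ae_lt {α : Type*} [MeasurableSpace α] {μ : Measure α} [NeZero μ]
    {f g : α → ℝ} (hf : Integrable f μ) (hg : Integrable g μ) (hlt : ∀ᵐ x ∂μ, f x < g x) :
    ∫ x, f x ∂μ < ∫ x, g x ∂μ := by
  rw [← sub_pos, ← integral_sub hg hf,
    integral_pos_iff_support_of_nonneg_ae (hlt.mono fun x hx => (sub_pos.2 hx).le) (hg.sub hf)]
  refine pos_iff_ne_zero.2 fun hzero => ?_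
  obtain ⟨x, hx, hx0⟩ := (hlt.and (measure_eq_zero_iff_ae_notMem.1 hzero)).exists
  exact hx0 (sub_pos.2 hx).ne'

theorem norm_inv_sq_add_le {a x u : ℝ} (ha : 0 < a) (hx : a ≤ x) (hu : 0 ≤ u) :
    ‖(x ^ 2 + u)⁻¹‖ ≤ (a ^ 2)⁻¹ := by
  rw [Real.norm_of_nonneg (inv_nonneg.2 (add_nonneg (sq_nonneg x) hu))]
  exact inv_anti₀ (by positivity) (by nlinarith)

theorem integral_inv_sq_add_le {μ : Measure ℝ} [IsFiniteMeasure μ] {u : ℝ} (hu : 0 < u) :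
    ∫ x, (x ^ 2 + u)⁻¹ ∂μ ≤ μ.real univ * u⁻¹ :=
  calc ∫ x, (x ^ 2 + u)⁻¹ ∂μ ≤ ∫ _, u⁻¹ ∂μ :=
        integral_mono_of_nonneg (ae_of_all _ fun x => by positivity) (integrable_const _)
          (ae_of_all _ fun x => inv_anti₀ hu (le_add_of_nonneg_left (sq_nonneg x)))
    _ = μ.real univ * u⁻¹ := by rw [integral_const, smul_eq_mul]

theorem integrable_inv_sq_add {μ : Measure ℝ} [IsFiniteMeasure μ] {a : ℝ} (ha : 0 < a)
    (hμ : ∀ᵐ x ∂μ, a ≤ x) {u : ℝ} (hu : 0 ≤ u) : Integrable (fun x => (x ^ 2 + u)⁻¹) μ :=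
  .of_bound (by fun_prop) _ (hμ.mono fun _ hx => norm_inv_sq_add_le ha hx hu)

theorem continuousOn_integral_inv_sq_add {μ : Measure ℝ} [IsFiniteMeasure μ] {a : ℝ} (ha : 0 < a)
    (hμ : ∀ᵐ x ∂μ, a ≤ x) :
    ContinuousOn (fun u => ∫ x, (x ^ 2 + u)⁻¹ ∂μ) (Ici 0) :=
  continuousOn_of_dominated (fun _ _ => by fun_prop)
    (fun _ hu => hμ.mono fun _ hx => norm_inv_sq_add_le ha hx hu) (integrable_const _)
    (hμ.mono fun x hx => ContinuousOn.inv₀ (by fun_prop) fun u (hu : 0 ≤ u) => by nlinarith)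

theorem strictAntiOn_integral_inv_sq_add {μ : Measure ℝ} [IsFiniteMeasure μ] [NeZero μ] {a : ℝ}
    (ha : 0 < a) (hμ : ∀ᵐ x ∂μ, a ≤ x) :
    StrictAntiOn (fun u => ∫ x, (x ^ 2 + u)⁻¹ ∂μ) (Ici 0) := fun u (hu : 0 ≤ u) v hv huv =>
  integral_lt_integral_of_ae_lt (integrable_inv_sq_add ha hμ hv)
    (integrable_inv_sq_add ha hμ hu)
    (hμ.mono fun x hx => inv_strictAnti₀ (by nlinarith) (by linarith))

theorem existsUnique_integral_inv_sq_add_eq {μ : Measure ℝ} [IsFiniteMeasure μ] [NeZero μ] {a : ℝ}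
    (ha : 0 < a) (hμ : ∀ᵐ x ∂μ, a ≤ x) {y : ℝ} (hy0 : 0 < y) (hy : y < ∫ x, (x ^ 2)⁻¹ ∂μ) :
    ∃! u, 0 < u ∧ ∫ x, (x ^ 2 + u)⁻¹ ∂μ = y := by
  set g := fun u => ∫ x, (x ^ 2 + u)⁻¹ ∂μ with hg
  have hg0 : g 0 = ∫ x, (x ^ 2)⁻¹ ∂μ := by simp only [hg, add_zero]
  have hM : 0 < μ.real univ := measureReal_univ_pos
  set U := 2 * μ.real univ / y with hU_def
  have hU : 0 < U := by positivity
  have hgU : g U < y :=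
    calc g U ≤ μ.real univ * U⁻¹ := integral_inv_sq_add_le hU
      _ = y / 2 := by rw [hU_def]; field_simp
      _ < y := by linarith
  obtain ⟨u, hu, hgu⟩ : y ∈ g '' Icc 0 U :=
    intermediate_value_Icc' hU.le
      ((continuousOn_integral_inv_sq_add ha hμ).mono Icc_subset_Ici_self)
      ⟨hgU.le, hy.le.trans_eq hg0.symm⟩
  have hu0 : 0 < u := hu.1.lt_of_ne <| by
    rintro rfl
    exact hy.ne (hgu.symm.trans hg0)
  exact ⟨u, ⟨hu0, hgu⟩, fun v ⟨hv, hgv⟩ =>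
    (strictAntiOn_integral_inv_sq_add ha hμ).injOn (mem_Ici.2 hv.le) (mem_Ici.2 hu0.le)
      (hgv.trans hgu.symm)⟩

/-- For t > t_c := (∫ λ⁻² dμ_D)⁻¹ there is a unique c > 0 with
∫ 1/(λ² + t²c) dμ_D(λ) = 1/t. -/
theorem stmt1 (μD : Measure ℝ) [IsProbabilityMeasure μD] (a b : ℝ)
    (ha : 0 < a) (hsupp : μD (Set.Icc a b)ᶜ = 0) (t : ℝ)
    (ht : (∫ x, (x ^ 2)⁻¹ ∂μD)⁻¹ < t) :
    ∃! c : ℝ, 0 < c ∧ ∫ x, (x ^ 2 + t ^ 2 * c)⁻¹ ∂μD = 1 / t := by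
  have hμ : ∀ᵐ x ∂μD, a ≤ x :=
    (measure_eq_zero_iff_ae_notMem.1 hsupp).mono fun x hx => (notMem_compl_iff.1 hx).1
  have hI : 0 < ∫ x, (x ^ 2)⁻¹ ∂μD := by
    rw [← integral_zero ℝ ℝ]
    exact integral_lt_integral_of_ae_lt (integrable_zero _ _ _)
      (by simpa using integrable_inv_sq_add ha hμ le_rfl)
      (hμ.mono fun x hx => by have := ha.trans_le hx; positivity)
  have ht0 : 0 < t := (inv_pos.2 hI).trans ht
  obtain ⟨u, ⟨hu, hgu⟩, huniq⟩ := existsUnique_integral_inv_sq_add_eq ha hμ (one_div_pos.2 ht0)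
    (by rwa [one_div, inv_lt_comm₀ ht0 hI])
  have ht2 : 0 < t ^ 2 := by positivity
  refine ⟨u / t ^ 2, ⟨div_pos hu ht2, by rwa [mul_div_cancel₀ _ ht2.ne']⟩, fun c ⟨hc, hgc⟩ => ?_⟩
  rw [← huniq (t ^ 2 * c) ⟨mul_pos ht2 hc, hgc⟩, mul_div_cancel_left₀ _ ht2.ne']
end

section
/- Let M be an N×N complex matrix with positive definite imaginary part, i.e. Im M := (M − M*)/(2i) > 0, and suppose additionally that M is symmetric (Mᵀ = M). Define the real matrix F by F_{jk} = |M_{jk}|², and suppose J > 0 satisfies ‖F‖ ≤ 1/J² (operator norm). Define R by R_{jk} = (M_{jk})². Then for every nonzero vector v ∈ ℂ^N, Re⟨v, (Id − J²R)v⟩ > 0; in particular Id − J²R is invertible and Re⟨w, (Id−J²R)^{-1} w⟩ > 0 for every nonzero w. -/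
/-!
Bounding each term of `Re ⟨v, R v⟩ = ∑ Re (conj vⱼ Rⱼₖ vₖ)` by `|vⱼ| Fⱼₖ |vₖ|` gives
`Re ⟨v, R v⟩ ≤ ⟨|v|, F |v|⟩ ≤ ‖F‖ ‖v‖² ≤ ‖v‖² / J²`, and the bound is strict because on the
diagonal `Re (Mⱼⱼ²) = (Re Mⱼⱼ)² - (Im Mⱼⱼ)² < |Mⱼⱼ|²`, where `Im Mⱼⱼ > 0` since `Im M` is positive
definite. So `Id - J²R` has positive definite real part, which makes it invertible with an
inverse of positive definite real part: `Re ⟨w, A⁻¹ w⟩ = Re ⟨A v, v⟩` for `v = A⁻¹ w`.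
-/

open Matrix
open scoped ComplexOrder

namespace Matrix

variable {𝕜 ι : Type*} [RCLike 𝕜] [Fintype ι]

def IsStrictlyAccretive (A : Matrix ι ι 𝕜) : Prop :=
  ∀ v : ι → 𝕜, v ≠ 0 → 0 < RCLike.re (star v ⬝ᵥ (A *ᵥ v))

theorem re_dotProduct_mulVec_lt_of_norm_le {R : Matrix ι ι 𝕜} {F : Matrix ι ι ℝ}
    (hle : ∀ j k, ‖R j k‖ ≤ F j k) (hdiag : ∀ j, RCLike.re (R j j) < F j j)
    {v : ι → 𝕜} (hv : v ≠ 0) :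
    RCLike.re (star v ⬝ᵥ (R *ᵥ v)) < (fun j ↦ ‖v j‖) ⬝ᵥ (F *ᵥ fun j ↦ ‖v j‖) := by
  obtain ⟨i, hi⟩ : ∃ i, v i ≠ 0 := Function.ne_iff.1 hv
  have hterm : ∀ j k, RCLike.re (star (v j) * (R j k * v k)) ≤ ‖v j‖ * (F j k * ‖v k‖) :=
    fun j k ↦ calc
      _ ≤ ‖star (v j) * (R j k * v k)‖ := RCLike.re_le_norm _
      _ = ‖v j‖ * (‖R j k‖ * ‖v k‖) := by simp
      _ ≤ ‖v j‖ * (F j k * ‖v k‖) := by gcongr; exact hle j k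
  have hdiag_term : RCLike.re (star (v i) * (R i i * v i)) < ‖v i‖ * (F i i * ‖v i‖) := by
    have hvi : 0 < ‖v i‖ ^ 2 := by positivity
    calc RCLike.re (star (v i) * (R i i * v i)) = ‖v i‖ ^ 2 * RCLike.re (R i i) := by
          rw [show star (v i) * (R i i * v i) = star (v i) * v i * R i i by ring,
            RCLike.star_def, RCLike.conj_mul, ← RCLike.ofReal_pow, RCLike.re_ofReal_mul]
      _ < ‖v i‖ ^ 2 * F i i := by gcongr; exact hdiag i
      _ = ‖v i‖ * (F i i * ‖v i‖) := by ring
  simp only [dotProduct, mulVec, map_sum, Pi.star_apply, Finset.mul_sum]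
  refine Finset.sum_lt_sum (fun j _ ↦ Finset.sum_le_sum fun k _ ↦ hterm j k)
    ⟨i, Finset.mem_univ _,
      Finset.sum_lt_sum (fun k _ ↦ hterm i k) ⟨i, Finset.mem_univ _, hdiag_term⟩⟩

section

variable [DecidableEq ι]

namespace IsStrictlyAccretive

variable {A : Matrix ι ι 𝕜}

theorem isUnit (hA : A.IsStrictlyAccretive) : IsUnit A := by
  rw [isUnit_iff_isUnit_det, isUnit_iff_ne_zero, Ne, ← exists_mulVec_eq_zero_iff]
  rintro ⟨v, hv, hAv⟩
  simpa [hAv] using hA v hv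

theorem inv (hA : A.IsStrictlyAccretive) : A⁻¹.IsStrictlyAccretive := by
  intro w hw
  set v := A⁻¹ *ᵥ w
  have hAv : A *ᵥ v = w := by
    rw [mulVec_mulVec, mul_nonsing_inv _ ((isUnit_iff_isUnit_det A).1 hA.isUnit), one_mulVec]
  have hv : v ≠ 0 := by
    intro h
    rw [h, mulVec_zero] at hAv
    exact hw hAv.symm
  rw [star_dotProduct, RCLike.star_def, RCLike.conj_re, ← hAv]
  exact hA v hv

end IsStrictlyAccretive

theorem re_dotProduct_one_sub_smul_mulVec (c : ℝ) (A : Matrix ι ι 𝕜) (v : ι → 𝕜) :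
    RCLike.re (star v ⬝ᵥ ((1 - (c : 𝕜) • A) *ᵥ v)) =
      ∑ i, ‖v i‖ ^ 2 - c * RCLike.re (star v ⬝ᵥ (A *ᵥ v)) := by
  rw [sub_mulVec, one_mulVec, smul_mulVec, dotProduct_sub, dotProduct_smul, map_sub,
    smul_eq_mul, RCLike.re_ofReal_mul]
  simp [dotProduct, RCLike.conj_mul]

theorem dotProduct_mulVec_le_opNorm_mul (F : Matrix ι ι ℝ) (x : ι → ℝ) :
    x ⬝ᵥ (F *ᵥ x) ≤ ‖toEuclideanCLM (𝕜 := ℝ) F‖ * (x ⬝ᵥ x) := by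
  set T := toEuclideanCLM (𝕜 := ℝ) F
  have hx : x ⬝ᵥ x = ‖WithLp.toLp 2 x‖ ^ 2 := by
    rw [← real_inner_self_eq_norm_sq, EuclideanSpace.inner_toLp_toLp, star_trivial]
  calc x ⬝ᵥ (F *ᵥ x) = inner ℝ (WithLp.toLp 2 x) (T (WithLp.toLp 2 x)) :=
        (inner_toEuclideanCLM F _ _).symm
    _ ≤ ‖WithLp.toLp 2 x‖ * ‖T (WithLp.toLp 2 x)‖ := real_inner_le_norm _ _
    _ ≤ ‖WithLp.toLp 2 x‖ * (‖T‖ * ‖WithLp.toLp 2 x‖) := by gcongr; exact T.le_opNorm _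
    _ = ‖T‖ * (x ⬝ᵥ x) := by rw [hx]; ring

theorem isStrictlyAccretive_one_sub_smul {c : ℝ} (hc : 0 < c) {R : Matrix ι ι 𝕜}
    {F : Matrix ι ι ℝ} (hle : ∀ j k, ‖R j k‖ ≤ F j k) (hdiag : ∀ j, RCLike.re (R j j) < F j j)
    (hF : c * ‖toEuclideanCLM (𝕜 := ℝ) F‖ ≤ 1) :
    (1 - (c : 𝕜) • R).IsStrictlyAccretive := by
  intro v hv
  set u : ι → ℝ := fun j ↦ ‖v j‖
  have huu : u ⬝ᵥ u = ∑ j, ‖v j‖ ^ 2 := by simp [u, dotProduct, sq]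
  have hquad : RCLike.re (star v ⬝ᵥ (R *ᵥ v)) < ‖toEuclideanCLM (𝕜 := ℝ) F‖ * (u ⬝ᵥ u) :=
    (re_dotProduct_mulVec_lt_of_norm_le hle hdiag hv).trans_le
      (dotProduct_mulVec_le_opNorm_mul F u)
  have huu_nonneg : 0 ≤ u ⬝ᵥ u := huu ▸ by positivity
  rw [re_dotProduct_one_sub_smul_mulVec, ← huu, sub_pos]
  calc c * RCLike.re (star v ⬝ᵥ (R *ᵥ v)) < c * (‖toEuclideanCLM (𝕜 := ℝ) F‖ * (u ⬝ᵥ u)) := by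
        gcongr
    _ = c * ‖toEuclideanCLM (𝕜 := ℝ) F‖ * (u ⬝ᵥ u) := by ring
    _ ≤ u ⬝ᵥ u := by nlinarith

end

end Matrix

theorem Complex.re_sq_lt_norm_sq {z : ℂ} (hz : z.im ≠ 0) : (z ^ 2).re < ‖z‖ ^ 2 := by
  rw [Complex.sq_norm, Complex.normSq_apply, sq, Complex.mul_re]
  nlinarith [mul_self_pos.2 hz]

theorem Matrix.PosDef.im_apply_self_pos {ι : Type*} [Fintype ι] {M : Matrix ι ι ℂ}
    (hM : (((2 : ℂ) * Complex.I)⁻¹ • (M - Mᴴ)).PosDef) (j : ι) : 0 < (M j j).im := by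
  have h := hM.diag_pos (i := j)
  have hentry : (((2 : ℂ) * Complex.I)⁻¹ • (M - Mᴴ)) j j = ((M j j).im : ℂ) := by
    rw [smul_apply, sub_apply, conjTranspose_apply, RCLike.star_def, Complex.sub_conj, smul_eq_mul]
    push_cast
    field_simp
  rwa [hentry, Complex.zero_lt_real] at h

theorem stmt5_general (N : ℕ) (M : Matrix (Fin N) (Fin N) ℂ)
    (hIm : (((2 : ℂ) * Complex.I)⁻¹ • (M - Mᴴ)).PosDef)
    (J : ℝ) (hJ : 0 < J)
    (F : Matrix (Fin N) (Fin N) ℝ) (hF : ∀ j k, F j k = ‖M j k‖ ^ 2)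
    (hFnorm : ‖Matrix.toEuclideanCLM (𝕜 := ℝ) F‖ ≤ 1 / J ^ 2)
    (R : Matrix (Fin N) (Fin N) ℂ) (hR : ∀ j k, R j k = (M j k) ^ 2) :
    (∀ v : Fin N → ℂ, v ≠ 0 →
      0 < (star v ⬝ᵥ ((1 - (J ^ 2 : ℂ) • R) *ᵥ v)).re) ∧
    IsUnit (1 - (J ^ 2 : ℂ) • R) ∧
    (∀ w : Fin N → ℂ, w ≠ 0 →
      0 < (star w ⬝ᵥ ((1 - (J ^ 2 : ℂ) • R)⁻¹ *ᵥ w)).re) := by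
  have hJ2 : 0 < J ^ 2 := by positivity
  have hA : (1 - ((J ^ 2 : ℝ) : ℂ) • R).IsStrictlyAccretive :=
    isStrictlyAccretive_one_sub_smul (F := F) hJ2 (fun j k ↦ by rw [hR, hF, norm_pow])
      (fun j ↦ by rw [hR, hF]; exact Complex.re_sq_lt_norm_sq (hIm.im_apply_self_pos j).ne')
      ((le_div_iff₀' hJ2).1 (by simpa using hFnorm))
  push_cast at hA
  exact ⟨hA, hA.isUnit, hA.inv⟩

/-- For M complex symmetric with positive definite imaginary
part, F the entrywise square-modulus matrix with operator norm ≤ 1/J², and R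
the entrywise square, Re⟨v, (Id − J²R)v⟩ > 0 for all nonzero v; in particular
Id − J²R is invertible and Re⟨w,(Id−J²R)⁻¹w⟩ > 0 for nonzero w. -/
theorem stmt5 (N : ℕ) (M : Matrix (Fin N) (Fin N) ℂ) (hsym : Mᵀ = M)
    (hIm : (((2 : ℂ) * Complex.I)⁻¹ • (M - Mᴴ)).PosDef)
    (J : ℝ) (hJ : 0 < J)
    (F : Matrix (Fin N) (Fin N) ℝ) (hF : ∀ j k, F j k = ‖M j k‖ ^ 2)
    (hFnorm : ‖Matrix.toEuclideanCLM (𝕜 := ℝ) F‖ ≤ 1 / J ^ 2)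
    (R : Matrix (Fin N) (Fin N) ℂ) (hR : ∀ j k, R j k = (M j k) ^ 2) :
    (∀ v : Fin N → ℂ, v ≠ 0 →
      0 < (star v ⬝ᵥ ((1 - (J ^ 2 : ℂ) • R) *ᵥ v)).re) ∧
    IsUnit (1 - (J ^ 2 : ℂ) • R) ∧
    (∀ w : Fin N → ℂ, w ≠ 0 →
      0 < (star w ⬝ᵥ ((1 - (J ^ 2 : ℂ) • R)⁻¹ *ᵥ w)).re) :=
  stmt5_general N M hIm J hJ F hF hFnorm R hR
end

section
/- Let F be a real symmetric N×N matrix with nonnegative entries, and let v ∈ ℝ^N have strictly positive entries, η > 0 and J > 0. If v = F(η·1 + J² v) entrywise, then the operator norm of F satisfies ‖F‖ < 1/J². -/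
/-- If F is real symmetric with nonnegative entries, v has
strictly positive entries, η > 0, J > 0, and vⱼ = Σₖ F_{jk}(η + J² vₖ) for
all j, then the ℓ²-operator norm of F is strictly less than 1/J². -/
theorem stmt6 (N : ℕ) (F : Matrix (Fin N) (Fin N) ℝ) (hsym : F.IsSymm)
    (hpos : ∀ j k, 0 ≤ F j k) (v : Fin N → ℝ) (hv : ∀ j, 0 < v j)
    (η J : ℝ) (hη : 0 < η) (hJ : 0 < J)
    (heq : ∀ j, v j = ∑ k, F j k * (η + J ^ 2 * v k)) :
    ‖Matrix.toEuclideanCLM (𝕜 := ℝ) F‖ < 1 / J ^ 2 := by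
  rcases Nat.eq_zero_or_pos N with hN | hN
  · subst hN
    have hz : (Matrix.toEuclideanCLM (𝕜 := ℝ) F) = 0 := Subsingleton.elim _ _
    rw [hz, norm_zero]
    positivity
  haveI : Nonempty (Fin N) := Fin.pos_iff_nonempty.mp hN
  set w : Fin N → ℝ := fun j => ∑ k, F j k * v k with hw
  have hw0 : ∀ j, 0 ≤ w j := fun j =>
    Finset.sum_nonneg fun k _ => mul_nonneg (hpos j k) (hv k).le
  have hkey : ∀ j, J ^ 2 * w j < v j := by
    intro j
    have hs : 0 < ∑ k, F j k := by
      rcases (Finset.sum_nonneg fun k (_ : k ∈ Finset.univ) => hpos j k).lt_or_eq with h | h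
      · exact h
      · exfalso
        have hall : ∀ k ∈ Finset.univ, F j k = 0 :=
          (Finset.sum_eq_zero_iff_of_nonneg fun k _ => hpos j k).mp h.symm
        have : v j = 0 := by
          rw [heq j]
          exact Finset.sum_eq_zero fun k hk => by rw [hall k hk, zero_mul]
        exact (hv j).ne' this
    have : v j = η * (∑ k, F j k) + J ^ 2 * w j := by
      rw [heq j, hw, Finset.mul_sum, Finset.mul_sum, ← Finset.sum_add_distrib]
      exact Finset.sum_congr rfl fun k _ => by ring
    nlinarith [mul_pos hη hs]
  set c : ℝ := Finset.univ.sup' Finset.univ_nonempty (fun j => w j / v j) with hc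
  have hc1 : ∀ j, w j ≤ c * v j := by
    intro j
    have := Finset.le_sup' (fun j => w j / v j) (Finset.mem_univ j)
    rw [div_le_iff₀ (hv j)] at this
    linarith [this]
  have hc0 : 0 ≤ c := by
    obtain ⟨j⟩ := ‹Nonempty (Fin N)›
    exact le_trans (div_nonneg (hw0 j) (hv j).le)
      (Finset.le_sup' (fun j => w j / v j) (Finset.mem_univ j))
  have hclt : c < 1 / J ^ 2 := by
    rw [hc, Finset.sup'_lt_iff]
    intro j _
    rw [div_lt_div_iff₀ (hv j) (by positivity)]
    nlinarith [hkey j]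
  refine lt_of_le_of_lt ?_ hclt
  apply ContinuousLinearMap.opNorm_le_bound _ hc0
  intro x
  have hx_apply : ∀ j, (Matrix.toEuclideanCLM (𝕜 := ℝ) F x) j = ∑ k, F j k * x k := by
    intro j
    have := congrFun (Matrix.ofLp_toEuclideanCLM (𝕜 := ℝ) F x) j
    simpa [Matrix.mulVec, dotProduct] using this
  set a : Fin N → ℝ := fun k => |x k| with ha
  have key : ∑ j, (∑ k, F j k * x k) ^ 2 ≤ c ^ 2 * ∑ j, x j ^ 2 := by
    have step1 : ∀ j, (∑ k, F j k * x k) ^ 2 ≤ (∑ k, F j k * a k) ^ 2 := by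
      intro j
      rw [← sq_abs]
      apply pow_le_pow_left₀ (abs_nonneg _)
      refine (Finset.abs_sum_le_sum_abs _ _).trans (le_of_eq ?_)
      exact Finset.sum_congr rfl fun k _ => by
        rw [abs_mul, abs_of_nonneg (hpos j k)]
    have step2 : ∀ j, (∑ k, F j k * a k) ^ 2 ≤
        (c * v j) * (∑ k, F j k * (a k ^ 2 / v k)) := by
      intro j
      refine le_trans
        (Finset.sum_sq_le_sum_mul_sum_of_sq_eq_mul Finset.univ
          (r := fun k => F j k * a k)
          (f := fun k => F j k * v k)
          (g := fun k => F j k * (a k ^ 2 / v k))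
          (fun k _ => mul_nonneg (hpos j k) (hv k).le)
          (fun k _ => mul_nonneg (hpos j k)
            (div_nonneg (sq_nonneg _) (hv k).le))
          (fun k _ => by
            have hvk := (hv k).ne'
            field_simp) ) ?_
      have h2 : 0 ≤ ∑ k, F j k * (a k ^ 2 / v k) :=
        Finset.sum_nonneg fun k _ => mul_nonneg (hpos j k)
          (div_nonneg (sq_nonneg _) (hv k).le)
      exact mul_le_mul_of_nonneg_right (hc1 j) h2
    calc ∑ j, (∑ k, F j k * x k) ^ 2
        ≤ ∑ j, (c * v j) * (∑ k, F j k * (a k ^ 2 / v k)) :=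
          Finset.sum_le_sum fun j _ => le_trans (step1 j) (step2 j)
      _ = ∑ j, ∑ k, c * v j * (F j k * (a k ^ 2 / v k)) :=
          Finset.sum_congr rfl fun j _ => Finset.mul_sum _ _ _
      _ = ∑ k, ∑ j, c * v j * (F j k * (a k ^ 2 / v k)) := Finset.sum_comm
      _ = ∑ k, c * ((a k ^ 2 / v k) * w k) := by
          refine Finset.sum_congr rfl fun k _ => ?_
          rw [hw]
          rw [Finset.mul_sum, Finset.mul_sum]
          refine Finset.sum_congr rfl fun j _ => ?_
          have hskj : F k j = F j k := (Matrix.IsSymm.apply hsym j k)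
          rw [hskj]; ring
      _ ≤ ∑ k, c * ((a k ^ 2 / v k) * (c * v k)) :=
          Finset.sum_le_sum fun k _ =>
            mul_le_mul_of_nonneg_left
              (mul_le_mul_of_nonneg_left (hc1 k)
                (div_nonneg (sq_nonneg _) (hv k).le)) hc0
      _ = c ^ 2 * ∑ j, x j ^ 2 := by
          rw [Finset.mul_sum]
          refine Finset.sum_congr rfl fun k _ => ?_
          have hvk := (hv k).ne'
          rw [ha]
          field_simp
          rw [sq_abs]
  rw [EuclideanSpace.norm_eq, EuclideanSpace.norm_eq]
  have lhs_eq : ∑ j, ‖(Matrix.toEuclideanCLM (𝕜 := ℝ) F x) j‖ ^ 2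
      = ∑ j, (∑ k, F j k * x k) ^ 2 := by
    refine Finset.sum_congr rfl fun j _ => ?_
    rw [hx_apply j, Real.norm_eq_abs, sq_abs]
  rw [lhs_eq]
  have : ∑ j, ‖x j‖ ^ 2 = ∑ j, x j ^ 2 := by
    refine Finset.sum_congr rfl fun j _ => by rw [Real.norm_eq_abs, sq_abs]
  rw [this]
  calc Real.sqrt (∑ j, (∑ k, F j k * x k) ^ 2)
      ≤ Real.sqrt (c ^ 2 * ∑ j, x j ^ 2) := Real.sqrt_le_sqrt key
    _ = c * Real.sqrt (∑ j, x j ^ 2) := by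
        rw [Real.sqrt_mul (sq_nonneg c), Real.sqrt_sq hc0]
end

section
/- For F(u,t) = −∫log(λ)dμ_D(λ) + ∫ log|λ−u| dμ_t(λ) − u²/(2t), with μ_t = ρ_{sc,t} ⊞ μ_D and μ_D a probability measure compactly supported in (0,∞), the map u ↦ F(u,t) is concave on ℝ for every t > 0. -/
open MeasureTheory Complex Set Filter Topology

/-!
Write `m` for the Stieltjes transform of `μt` and `φ_ε(u) = ∫ log |x - (u + iε)| dμt(x)`, so
that `φ_ε' = -Re m(u + iε)` and `φ_ε'' = -Re m'(u + iε)`. Differentiating the Pastur relation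
`m(z) = m_D(w)`, `w = z + t m(z)`, gives `m' = J (1 + t m')` with `J = m_D'(w)`, while its
imaginary part reads `Im m = Im w ∫ |x - w|⁻² dμD`, which forces `t ∫ |x - w|⁻² dμD < 1` and
hence `t |J| < 1`. So `1 + t m' = (1 - t J)⁻¹` has nonnegative real part: `φ_ε'' ≤ 1/t`, and
`φ_ε(u) - u²/(2t)` is concave. As `ε ↓ 0`, `φ_ε` decreases to the logarithmic potential of `μt`.
Since `φ_ε ≥ 0` at distance `≥ 1` from the support, concavity bounds `φ_ε(u)` below uniformly in
`ε`; this rules out an atom of `μt` at `u` and lets monotone convergence carry concavity to the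
limit.
-/

namespace Pastur

theorem concaveOn_of_tendsto {E : Type*} [AddCommMonoid E] [Module ℝ E] {s : Set E}
    {ι : Type*} {l : Filter ι} [l.NeBot] {f : ι → E → ℝ} {g : E → ℝ}
    (hf : ∀ i, ConcaveOn ℝ s (f i)) (hs : Convex ℝ s)
    (hlim : ∀ x ∈ s, Tendsto (fun i => f i x) l (𝓝 (g x))) : ConcaveOn ℝ s g := by
  refine ⟨hs, fun x hx y hy a b ha hb hab => ?_⟩
  refine le_of_tendsto_of_tendsto (((hlim x hx).const_smul a).add ((hlim y hy).const_smul b))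
    (hlim _ (hs hx hy ha hb hab)) (Eventually.of_forall fun i => ?_)
  exact (hf i).2 hx hy ha hb hab

section MonotoneConvergence

variable {α : Type*} [MeasurableSpace α] {μ : Measure α} {f : ℕ → α → ℝ} {F : α → ℝ} {B : ℝ}

theorem integrable_of_antitone_of_le_integral (hf : ∀ n, Integrable (f n) μ)
    (hanti : ∀ᵐ x ∂μ, Antitone (f · x)) (hlim : ∀ᵐ x ∂μ, Tendsto (f · x) atTop (𝓝 (F x)))
    (hB : ∀ n, B ≤ ∫ x, f n x ∂μ) : Integrable F μ := by
  have hgap : ∀ n, ∫⁻ x, ENNReal.ofReal (f 0 x - f n x) ∂μ ≤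
      ENNReal.ofReal (∫ x, f 0 x ∂μ - B) := by
    intro n
    rw [← ofReal_integral_eq_lintegral_ofReal (f := fun x => f 0 x - f n x) ((hf 0).sub (hf n)),
      integral_sub (hf 0) (hf n)]
    · exact ENNReal.ofReal_le_ofReal (by linarith [hB n])
    · filter_upwards [hanti] with x hx using sub_nonneg.2 (hx (Nat.zero_le n))
  have hlim_gap : ∀ᵐ x ∂μ, Tendsto (fun n => f 0 x - f n x) atTop (𝓝 (f 0 x - F x)) := by
    filter_upwards [hlim] with x hx using tendsto_const_nhds.sub hx
  have hF_le : ∀ᵐ x ∂μ, F x ≤ f 0 x := by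
    filter_upwards [hanti, hlim] with x hx hxlim
    exact le_of_tendsto' hxlim fun n => hx (Nat.zero_le n)
  have hint : Integrable (fun x => f 0 x - F x) μ := by
    refine ⟨aestronglyMeasurable_of_tendsto_ae _ (fun n => ((hf 0).sub (hf n)).1) hlim_gap, ?_⟩
    rw [hasFiniteIntegral_iff_ofReal (by filter_upwards [hF_le] with x hx using sub_nonneg.2 hx)]
    refine (le_of_tendsto' (lintegral_tendsto_of_tendsto_of_monotone
      (fun n => ((hf 0).sub (hf n)).aemeasurable.ennreal_ofReal) ?_ ?_) hgap).trans_lt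
      ENNReal.ofReal_lt_top
    · filter_upwards [hanti] with x hx n m hnm
      exact ENNReal.ofReal_le_ofReal (sub_le_sub_left (hx hnm) _)
    · filter_upwards [hlim_gap] with x hx using (ENNReal.continuous_ofReal.tendsto _).comp hx
  convert (hf 0).sub hint using 1
  ext x
  simp

theorem tendsto_integral_of_antitone_of_le_integral (hf : ∀ n, Integrable (f n) μ)
    (hanti : ∀ᵐ x ∂μ, Antitone (f · x)) (hlim : ∀ᵐ x ∂μ, Tendsto (f · x) atTop (𝓝 (F x)))
    (hB : ∀ n, B ≤ ∫ x, f n x ∂μ) :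
    Tendsto (fun n => ∫ x, f n x ∂μ) atTop (𝓝 (∫ x, F x ∂μ)) :=
  integral_tendsto_of_tendsto_of_antitone hf
    (integrable_of_antitone_of_le_integral hf hanti hlim hB) hanti hlim

theorem measure_singleton_eq_zero_of_tendsto_atBot [MeasurableSingletonClass α]
    [IsFiniteMeasure μ] {u : α} (hf : ∀ n, Integrable (f n) μ) (hle : ∀ n x, f n x ≤ f 0 x)
    (hu : Tendsto (f · u) atTop atBot) (hB : ∀ n, B ≤ ∫ x, f n x ∂μ) : μ {u} = 0 := by
  have hbound : ∀ n, B - ∫ x, f 0 x ∂μ ≤ μ.real {u} * (f n u - f 0 u) := by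
    intro n
    have hle' : ∀ x, f n x ≤ f 0 x + ({u} : Set α).indicator (fun _ => f n u - f 0 u) x := by
      intro x
      by_cases hx : x = u
      · subst hx; simp
      · simpa [hx] using hle n x
    have := integral_mono (hf n) ((hf 0).add ((integrable_const _).indicator
      (measurableSet_singleton u))) hle'
    simp only [Pi.add_apply] at this
    rw [integral_add (hf 0) ((integrable_const _).indicator (measurableSet_singleton u)),
      integral_indicator_const _ (measurableSet_singleton u), smul_eq_mul] at this
    linarith [hB n]
  by_contra hne
  have hpos : 0 < μ.real {u} := ENNReal.toReal_pos hne (measure_ne_top μ _)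
  obtain ⟨n, hn⟩ := (hu.atBot_add (tendsto_const_nhds (x := -f 0 u))).eventually
    (eventually_lt_atBot ((B - ∫ x, f 0 x ∂μ) / μ.real {u})) |>.exists
  have := hbound n
  rw [← div_le_iff₀' hpos] at this
  linarith

end MonotoneConvergence

noncomputable def stieltjes (μ : Measure ℝ) (z : ℂ) : ℂ := ∫ x, ((x : ℂ) - z)⁻¹ ∂μ

section Stieltjes

variable {μ : Measure ℝ} {z : ℂ}

theorem ofReal_sub_ne_zero (hz : z.im ≠ 0) (x : ℝ) : (x : ℂ) - z ≠ 0 := fun h =>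
  hz (by simpa using congrArg Complex.im h)

theorem norm_inv_ofReal_sub_le (hz : 0 < z.im) (x : ℝ) : ‖((x : ℂ) - z)⁻¹‖ ≤ z.im⁻¹ := by
  rw [norm_inv]
  refine inv_anti₀ hz ?_
  simpa [abs_of_pos hz] using abs_im_le_norm ((x : ℂ) - z)

theorem im_inv_ofReal_sub (x : ℝ) :
    ((x : ℂ) - z)⁻¹.im = z.im * ‖((x : ℂ) - z)⁻¹‖ ^ 2 := by
  rw [inv_im, norm_inv, inv_pow, ← normSq_eq_norm_sq]
  simp [div_eq_mul_inv]

theorem continuous_inv_ofReal_sub (hz : z.im ≠ 0) : Continuous fun x : ℝ => ((x : ℂ) - z)⁻¹ :=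
  (continuous_ofReal.sub continuous_const).inv₀ (ofReal_sub_ne_zero hz)

variable [IsFiniteMeasure μ]

theorem integrable_inv_ofReal_sub (hz : 0 < z.im) :
    Integrable (fun x : ℝ => ((x : ℂ) - z)⁻¹) μ :=
  .of_bound (continuous_inv_ofReal_sub hz.ne').aestronglyMeasurable _
    (ae_of_all _ (norm_inv_ofReal_sub_le hz))

theorem integrable_inv_ofReal_sub_sq (hz : 0 < z.im) :
    Integrable (fun x : ℝ => ((x : ℂ) - z)⁻¹ ^ 2) μ :=
  .of_bound ((continuous_inv_ofReal_sub hz.ne').pow 2).aestronglyMeasurable (z.im⁻¹ ^ 2)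
    (ae_of_all _ fun x => by
      rw [norm_pow]
      exact pow_le_pow_left₀ (norm_nonneg _) (norm_inv_ofReal_sub_le hz x) 2)

theorem stieltjes_im (hz : 0 < z.im) :
    (stieltjes μ z).im = z.im * ∫ x, ‖((x : ℂ) - z)⁻¹‖ ^ 2 ∂μ := by
  rw [stieltjes, ← imCLM_apply, ← ContinuousLinearMap.integral_comp_comm _
    (integrable_inv_ofReal_sub hz), ← integral_const_mul]
  simp only [imCLM_apply, im_inv_ofReal_sub]

theorem stieltjes_im_pos [NeZero μ] (hz : 0 < z.im) : 0 < (stieltjes μ z).im := by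
  have hpos : ∀ x : ℝ, 0 < ‖((x : ℂ) - z)⁻¹‖ ^ 2 := fun x =>
    pow_pos (norm_pos_iff.2 (inv_ne_zero (ofReal_sub_ne_zero hz.ne' x))) 2
  have hint : Integrable (fun x : ℝ => ‖((x : ℂ) - z)⁻¹‖ ^ 2) μ := by
    simpa only [norm_pow] using (integrable_inv_ofReal_sub_sq (μ := μ) hz).norm
  rw [stieltjes_im hz]
  refine mul_pos hz ?_
  rw [integral_pos_iff_support_of_nonneg (fun x => (hpos x).le) hint,
    Function.support_eq_univ fun x => (hpos x).ne']
  exact Measure.measure_univ_pos.2 (NeZero.ne μ)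

theorem hasDerivAt_inv_ofReal_sub (x : ℝ) (hz : (x : ℂ) - z ≠ 0) :
    HasDerivAt (fun w : ℂ => ((x : ℂ) - w)⁻¹) (((x : ℂ) - z)⁻¹ ^ 2) z := by
  have hsub : HasDerivAt (fun w : ℂ => (x : ℂ) - w) (-1) z := by
    simpa using (hasDerivAt_id z).const_sub (x : ℂ)
  exact (hsub.inv hz).congr_deriv (by rw [neg_neg, one_div, inv_pow])

theorem hasDerivAt_stieltjes (hz : 0 < z.im) :
    HasDerivAt (stieltjes μ) (∫ x, ((x : ℂ) - z)⁻¹ ^ 2 ∂μ) z := by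
  have hball : ∀ w ∈ Metric.ball z (z.im / 2), z.im / 2 < w.im := fun w hw => by
    have := (abs_sub_lt_iff.1 ((abs_im_le_norm (w - z)).trans_lt (mem_ball_iff_norm.1 hw))).2
    linarith
  refine (hasDerivAt_integral_of_dominated_loc_of_deriv_le
    (F := fun w (x : ℝ) => ((x : ℂ) - w)⁻¹) (F' := fun w (x : ℝ) => ((x : ℂ) - w)⁻¹ ^ 2)
    (bound := fun _ => (z.im / 2)⁻¹ ^ 2)
    (Metric.ball_mem_nhds z (half_pos hz))
    (Eventually.of_forall fun w => (measurable_ofReal.sub_const w).inv.aestronglyMeasurable)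
    (integrable_inv_ofReal_sub hz) (integrable_inv_ofReal_sub_sq hz).aestronglyMeasurable
    (ae_of_all _ fun x w hw => ?_) (integrable_const _)
    (ae_of_all _ fun x w hw => ?_)).2
  · have hw' := hball w hw
    have hnorm := (norm_inv_ofReal_sub_le ((half_pos hz).trans hw') x).trans
      (inv_anti₀ (half_pos hz) hw'.le)
    rw [norm_pow]
    exact pow_le_pow_left₀ (norm_nonneg _) hnorm 2
  · exact hasDerivAt_inv_ofReal_sub x (ofReal_sub_ne_zero ((half_pos hz).trans (hball w hw)).ne' x)

theorem hasDerivAt_re_stieltjes_add_mul_I {ε : ℝ} (hε : 0 < ε) (u : ℝ) :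
    HasDerivAt (fun u : ℝ => (stieltjes μ (u + ε * I)).re)
      (∫ x, ((x : ℂ) - (u + ε * I))⁻¹ ^ 2 ∂μ).re u := by
  have hshift : HasDerivAt (fun w : ℂ => stieltjes μ (w + ε * I))
      (∫ x, ((x : ℂ) - (u + ε * I))⁻¹ ^ 2 ∂μ) u := by
    simpa using (hasDerivAt_stieltjes (μ := μ) (z := u + ε * I) (by simpa using hε)).comp_add_const
      (u : ℂ) (ε * I)
  exact hshift.real_of_complex

end Stieltjes

theorem neg_inv_le_re_of_eq_mul {t : ℝ} (ht : 0 < t) {m J : ℂ} (hJ : t * ‖J‖ < 1)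
    (h : m = J * (1 + t * m)) : -t⁻¹ ≤ m.re := by
  have hinv : 1 + t * m = (1 - t * J)⁻¹ :=
    eq_inv_of_mul_eq_one_left (by linear_combination (t : ℂ) * h)
  have hre : 0 ≤ (1 - t * J).re := by
    have := re_le_norm J
    simp only [sub_re, one_re, re_ofReal_mul]
    nlinarith
  have hm : 0 ≤ 1 + t * m.re := by
    have : (1 + t * m).re = 1 + t * m.re := by simp
    rw [← this, hinv, inv_re]
    exact div_nonneg hre (normSq_nonneg _)
  rw [neg_le, ← one_div, le_div_iff₀ ht]
  linarith

section PasturRelation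

variable {μD μt : Measure ℝ} [IsFiniteMeasure μD] [IsProbabilityMeasure μt] {t : ℝ} {z : ℂ}

theorem im_add_mul_stieltjes_pos (ht : 0 ≤ t) (hz : 0 < z.im) :
    0 < (z + t * stieltjes μt z).im := by
  simpa using add_pos_of_pos_of_nonneg hz (mul_nonneg ht (stieltjes_im_pos hz).le)

variable (hP : ∀ z : ℂ, 0 < z.im → stieltjes μt z = stieltjes μD (z + t * stieltjes μt z))
include hP

theorem mul_integral_norm_inv_sq_lt_one (ht : 0 < t) (hz : 0 < z.im) :
    t * ∫ x, ‖((x : ℂ) - (z + t * stieltjes μt z))⁻¹‖ ^ 2 ∂μD < 1 := by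
  have hw := im_add_mul_stieltjes_pos (μt := μt) ht.le hz
  have hm := stieltjes_im_pos (μ := μt) hz
  have him := congrArg Complex.im (hP z hz)
  rw [stieltjes_im hw] at him
  simp only [add_im, im_ofReal_mul] at him hw
  by_contra hge
  nlinarith [mul_le_mul_of_nonneg_right (not_lt.1 hge) hw.le]

theorem integral_inv_sub_sq_eq_mul (ht : 0 ≤ t) (hz : 0 < z.im) :
    ∫ x, ((x : ℂ) - z)⁻¹ ^ 2 ∂μt = (∫ x, ((x : ℂ) - (z + t * stieltjes μt z))⁻¹ ^ 2 ∂μD) *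
      (1 + t * ∫ x, ((x : ℂ) - z)⁻¹ ^ 2 ∂μt) := by
  have hinner : HasDerivAt (fun ζ => ζ + t * stieltjes μt ζ)
      (1 + t * ∫ x, ((x : ℂ) - z)⁻¹ ^ 2 ∂μt) z :=
    (hasDerivAt_id z).add ((hasDerivAt_stieltjes hz).const_mul (t : ℂ))
  have hcomp := (hasDerivAt_stieltjes (μ := μD) (im_add_mul_stieltjes_pos ht hz)).comp z hinner
  refine (hasDerivAt_stieltjes hz).unique (hcomp.congr_of_eventuallyEq ?_)
  filter_upwards [(isOpen_lt continuous_const continuous_im).mem_nhds hz] with ζ hζ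
  exact hP ζ hζ

theorem neg_inv_le_re_integral_inv_sub_sq (ht : 0 < t) (hz : 0 < z.im) :
    -t⁻¹ ≤ (∫ x, ((x : ℂ) - z)⁻¹ ^ 2 ∂μt).re := by
  refine neg_inv_le_re_of_eq_mul ht ?_ (integral_inv_sub_sq_eq_mul hP ht.le hz)
  refine lt_of_le_of_lt ?_ (mul_integral_norm_inv_sq_lt_one hP ht hz)
  gcongr
  refine (norm_integral_le_integral_norm _).trans_eq ?_
  simp_rw [norm_pow]

end PasturRelation

/-- `∫ log |x - (u + iε)| dμ(x)`. -/
noncomputable def regLogPotential (μ : Measure ℝ) (ε u : ℝ) : ℝ :=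
  ∫ x, Real.log ((x - u) ^ 2 + ε ^ 2) / 2 ∂μ

section RegLogPotential

variable {μ : Measure ℝ} {c d ε : ℝ}

theorem regLogPotential_nonneg (h : μ (Icc c d)ᶜ = 0) {p : ℝ} (hp : ∀ x ∈ Icc c d, 1 ≤ |x - p|) :
    0 ≤ regLogPotential μ ε p := by
  refine integral_nonneg_of_ae ?_
  filter_upwards [mem_ae_iff.2 h] with x hx
  have : 1 ≤ (x - p) ^ 2 := by nlinarith [hp x hx, sq_abs (x - p), abs_nonneg (x - p)]
  have := Real.log_nonneg (show 1 ≤ (x - p) ^ 2 + ε ^ 2 by nlinarith [sq_nonneg ε])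
  simp only [Pi.zero_apply]
  positivity

theorem le_regLogPotential_of_concaveOn (h : μ (Icc c d)ᶜ = 0) {g : ℝ → ℝ}
    (hconc : ConcaveOn ℝ univ fun u => regLogPotential μ ε u - g u) (u : ℝ) :
    min (-g (min c u - 1)) (-g (max d u + 1)) + g u ≤ regLogPotential μ ε u := by
  have hleft := regLogPotential_nonneg (ε := ε) h (p := min c u - 1) fun x hx => by
    rw [abs_of_nonneg] <;> linarith [hx.1, min_le_left c u]
  have hright := regLogPotential_nonneg (ε := ε) h (p := max d u + 1) fun x hx => by
    rw [abs_of_nonpos] <;> linarith [hx.2, le_max_left d u]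
  have hmin := hconc.min_le_of_mem_Icc (x := min c u - 1) (y := max d u + 1) (z := u) (mem_univ _)
    (mem_univ _) ⟨by linarith [min_le_right c u], by linarith [le_max_right d u]⟩
  have := min_le_min
    (show -g (min c u - 1) ≤ regLogPotential μ ε (min c u - 1) - g (min c u - 1) by linarith)
    (show -g (max d u + 1) ≤ regLogPotential μ ε (max d u + 1) - g (max d u + 1) by linarith)
  linarith

theorem re_ofReal_sub_add_mul_I (x u ε : ℝ) : ((x : ℂ) - (u + ε * I)).re = x - u := by
  simp

theorem normSq_ofReal_sub_add_mul_I (x u ε : ℝ) :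
    normSq ((x : ℂ) - (u + ε * I)) = (x - u) ^ 2 + ε ^ 2 := by
  simp [normSq_apply, sq]

theorem hasDerivAt_log_sq_add_sq (hε : ε ≠ 0) (x u : ℝ) :
    HasDerivAt (fun u => Real.log ((x - u) ^ 2 + ε ^ 2) / 2)
      (-((x : ℂ) - (u + ε * I))⁻¹.re) u := by
  have hsq : HasDerivAt (fun u => (x - u) ^ 2 + ε ^ 2) (-2 * (x - u)) u := by
    simpa [mul_comm] using (((hasDerivAt_id u).const_sub x).pow 2).add_const (ε ^ 2)
  refine ((hsq.log (by positivity)).div_const 2).congr_deriv ?_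
  rw [inv_re, normSq_ofReal_sub_add_mul_I, re_ofReal_sub_add_mul_I]
  ring

variable [IsFiniteMeasure μ]

theorem integrable_log_sq_add_sq (h : μ (Icc c d)ᶜ = 0) (hε : ε ≠ 0) (u : ℝ) :
    Integrable (fun x => Real.log ((x - u) ^ 2 + ε ^ 2) / 2) μ := by
  rw [← Measure.restrict_eq_self_of_ae_mem (mem_ae_iff.2 h)]
  refine Continuous.integrableOn_Icc ?_
  exact ((continuous_id.sub continuous_const).pow 2 |>.add continuous_const).log
    (fun _ => (add_pos_of_nonneg_of_pos (sq_nonneg _) (sq_pos_of_ne_zero hε)).ne') |>.div_const 2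

theorem hasDerivAt_regLogPotential (h : μ (Icc c d)ᶜ = 0) (hε : 0 < ε) (u : ℝ) :
    HasDerivAt (regLogPotential μ ε) (-(stieltjes μ (u + ε * I)).re) u := by
  have hz : 0 < ((u : ℂ) + ε * I).im := by simpa using hε
  have key := hasDerivAt_integral_of_dominated_loc_of_deriv_le (μ := μ) (x₀ := u)
    (F := fun u x => Real.log ((x - u) ^ 2 + ε ^ 2) / 2)
    (F' := fun u (x : ℝ) => -((x : ℂ) - (u + ε * I))⁻¹.re) (bound := fun _ => ε⁻¹)
    (Metric.ball_mem_nhds u one_pos)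
    (Eventually.of_forall fun v => (integrable_log_sq_add_sq h hε.ne' v).aestronglyMeasurable)
    (integrable_log_sq_add_sq h hε.ne' u) ?_ ?_ (integrable_const _)
    (ae_of_all _ fun x v _ => hasDerivAt_log_sq_add_sq hε.ne' x v)
  · rw [stieltjes, ← reCLM_apply, ← ContinuousLinearMap.integral_comp_comm _
      (integrable_inv_ofReal_sub hz), ← integral_neg]
    exact key.2
  · exact (integrable_inv_ofReal_sub hz).re.neg.aestronglyMeasurable
  · refine ae_of_all _ fun x v _ => ?_
    have hv : 0 < ((v : ℂ) + ε * I).im := by simpa using hε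
    rw [norm_neg, Real.norm_eq_abs]
    calc _ ≤ _ := abs_re_le_norm _
      _ ≤ ((v : ℂ) + ε * I).im⁻¹ := norm_inv_ofReal_sub_le hv x
      _ = ε⁻¹ := by simp

theorem concaveOn_regLogPotential_sub (h : μ (Icc c d)ᶜ = 0) (hε : 0 < ε) {t : ℝ} (ht : 0 < t)
    (hd2 : ∀ z : ℂ, 0 < z.im → -t⁻¹ ≤ (∫ x, ((x : ℂ) - z)⁻¹ ^ 2 ∂μ).re) :
    ConcaveOn ℝ univ fun u => regLogPotential μ ε u - u ^ 2 / (2 * t) := by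
  have hquad : ∀ u : ℝ, HasDerivAt (fun u : ℝ => u ^ 2 / (2 * t)) (u / t) u := fun u =>
    ((hasDerivAt_pow 2 u).div_const (2 * t)).congr_deriv (by field_simp; norm_num)
  have hquad' : ∀ u : ℝ, HasDerivAt (fun u : ℝ => u / t) t⁻¹ u := fun u => by
    simpa using (hasDerivAt_id u).div_const t
  refine concaveOn_of_hasDerivWithinAt2_nonpos convex_univ
    (f' := fun u => -(stieltjes μ (u + ε * I)).re - u / t)
    (f'' := fun u => -(∫ x, ((x : ℂ) - (u + ε * I))⁻¹ ^ 2 ∂μ).re - t⁻¹)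
    (fun u _ => ((hasDerivAt_regLogPotential h hε u).sub (hquad u)).continuousAt.continuousWithinAt)
    (fun u _ => ((hasDerivAt_regLogPotential h hε u).sub (hquad u)).hasDerivWithinAt)
    (fun u _ => ((hasDerivAt_re_stieltjes_add_mul_I hε u).neg.sub (hquad' u)).hasDerivWithinAt)
    (fun u _ => by linarith [hd2 (u + ε * I) (by simpa using hε)])

end RegLogPotential

section Limit

theorem antitone_log_sq_add_one_div_sq (x u : ℝ) :
    Antitone fun n : ℕ => Real.log ((x - u) ^ 2 + (1 / (n + 1 : ℝ)) ^ 2) / 2 := by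
  intro n m hnm
  have hε : (1 / (m + 1 : ℝ)) ^ 2 ≤ (1 / (n + 1 : ℝ)) ^ 2 :=
    pow_le_pow_left₀ (by positivity) (Nat.one_div_le_one_div hnm) 2
  dsimp only
  gcongr

theorem tendsto_log_sq_add_one_div_sq {x u : ℝ} (hx : x ≠ u) :
    Tendsto (fun n : ℕ => Real.log ((x - u) ^ 2 + (1 / (n + 1 : ℝ)) ^ 2) / 2) atTop
      (𝓝 (Real.log |x - u|)) := by
  have hsq : Tendsto (fun n : ℕ => (x - u) ^ 2 + (1 / (n + 1 : ℝ)) ^ 2) atTop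
      (𝓝 ((x - u) ^ 2)) := by
    simpa using tendsto_const_nhds.add ((tendsto_one_div_add_atTop_nhds_zero_nat (𝕜 := ℝ)).pow 2)
  have hlog : Real.log |x - u| = Real.log ((x - u) ^ 2) / 2 := by
    rw [← sq_abs, Real.log_pow]
    ring
  rw [hlog]
  exact ((Real.continuousAt_log (pow_ne_zero 2 (sub_ne_zero.2 hx))).tendsto.comp hsq).div_const 2

theorem tendsto_log_sq_one_div_atBot :
    Tendsto (fun n : ℕ => Real.log ((1 / (n + 1 : ℝ)) ^ 2) / 2) atTop atBot := by
  have hsq : Tendsto (fun n : ℕ => (1 / (n + 1 : ℝ)) ^ 2) atTop (𝓝[>] 0) :=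
    tendsto_nhdsWithin_iff.2
      ⟨by simpa using (tendsto_one_div_add_atTop_nhds_zero_nat (𝕜 := ℝ)).pow 2,
        Eventually.of_forall fun n => by simp only [mem_Ioi]; positivity⟩
  exact (Real.tendsto_log_nhdsGT_zero.comp hsq).atBot_div_const two_pos

variable {μ : Measure ℝ} [IsFiniteMeasure μ] {c d : ℝ}

theorem tendsto_regLogPotential (h : μ (Icc c d)ᶜ = 0) {u B : ℝ}
    (hB : ∀ n : ℕ, B ≤ regLogPotential μ (1 / (n + 1)) u) :
    Tendsto (fun n : ℕ => regLogPotential μ (1 / (n + 1)) u) atTop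
      (𝓝 (∫ x, Real.log |x - u| ∂μ)) := by
  have hint : ∀ n : ℕ, Integrable (fun x => Real.log ((x - u) ^ 2 + (1 / (n + 1 : ℝ)) ^ 2) / 2) μ :=
    fun n => integrable_log_sq_add_sq h (by positivity) u
  have hatom : μ {u} = 0 :=
    measure_singleton_eq_zero_of_tendsto_atBot hint
      (fun n x => antitone_log_sq_add_one_div_sq x u (Nat.zero_le n))
      (by simpa using tendsto_log_sq_one_div_atBot) hB
  refine tendsto_integral_of_antitone_of_le_integral hint
    (ae_of_all _ fun x => antitone_log_sq_add_one_div_sq x u) ?_ hB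
  filter_upwards [measure_eq_zero_iff_ae_notMem.1 hatom] with x hx
  exact tendsto_log_sq_add_one_div_sq hx

end Limit

end Pastur

open Pastur in
theorem stmt14_general (μD μt : Measure ℝ) [IsProbabilityMeasure μD]
    [IsProbabilityMeasure μt]
    (c d : ℝ) (hsuppt : μt (Set.Icc c d)ᶜ = 0)
    (t : ℝ) (ht : 0 < t)
    (hpastur : ∀ z : ℂ, 0 < z.im →
      (∫ x, ((x : ℂ) - z)⁻¹ ∂μt) =
        ∫ x, ((x : ℂ) - z - t * ∫ y, ((y : ℂ) - z)⁻¹ ∂μt)⁻¹ ∂μD) :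
    ConcaveOn ℝ Set.univ (fun u : ℝ =>
      -(∫ x, Real.log x ∂μD) + (∫ x, Real.log |x - u| ∂μt)
        - u ^ 2 / (2 * t)) := by
  have hP : ∀ z : ℂ, 0 < z.im → stieltjes μt z = stieltjes μD (z + t * stieltjes μt z) :=
    fun z hz => by simpa only [stieltjes, sub_add_eq_sub_sub] using hpastur z hz
  have hconc : ∀ n : ℕ,
      ConcaveOn ℝ univ fun u => regLogPotential μt (1 / (n + 1)) u - u ^ 2 / (2 * t) :=
    fun n => concaveOn_regLogPotential_sub hsuppt (by positivity) ht fun _ =>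
      neg_inv_le_re_integral_inv_sub_sq hP ht
  have hlim : ConcaveOn ℝ univ fun u => (∫ x, Real.log |x - u| ∂μt) - u ^ 2 / (2 * t) :=
    concaveOn_of_tendsto hconc convex_univ fun u _ =>
      (tendsto_regLogPotential hsuppt fun n =>
        le_regLogPotential_of_concaveOn hsuppt (hconc n) u).sub_const _
  exact (hlim.add_const (-∫ x, Real.log x ∂μD)).congr fun u _ => by
    simp only [Pi.add_apply]
    ring

/-- Concavity in u of
F(u,t) = −∫log λ dμ_D + ∫log|λ−u| dμ_t − u²/(2t), where μ_t = ρ_{sc,t} ⊞ μ_D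
is characterized as the compactly supported probability measure whose
Stieltjes transform m satisfies the Pastur relation
m(z) = ∫ dμ_D(λ)/(λ − z − t m(z)) on the upper half plane. -/
theorem stmt14 (μD μt : Measure ℝ) [IsProbabilityMeasure μD]
    [IsProbabilityMeasure μt] (a b : ℝ) (ha : 0 < a)
    (hsuppD : μD (Set.Icc a b)ᶜ = 0)
    (c d : ℝ) (hsuppt : μt (Set.Icc c d)ᶜ = 0)
    (t : ℝ) (ht : 0 < t)
    (hpastur : ∀ z : ℂ, 0 < z.im →
      (∫ x, ((x : ℂ) - z)⁻¹ ∂μt) =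
        ∫ x, ((x : ℂ) - z - t * ∫ y, ((y : ℂ) - z)⁻¹ ∂μt)⁻¹ ∂μD) :
    ConcaveOn ℝ Set.univ (fun u : ℝ =>
      -(∫ x, Real.log x ∂μD) + (∫ x, Real.log |x - u| ∂μt)
        - u ^ 2 / (2 * t)) :=
  stmt14_general μD μt c d hsuppt t ht hpastur
end
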